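/- arXiv:1512.08088 — 2 statements merged into one kernel-verified Lean document; each statement's English description precedes it below -/
import Mathlib

section
/- Let ρ be a congruence on a commutative semiring A. Then √(√ρ) = √ρ = √(ρ₊); in particular √ρ is a radical congruence. -/
/-- The twisted product on `A × A`. -/
def tmul {A : Type*} [CommSemiring A] (p q : A × A) : A × A :=
  (p.1 * q.1 + p.2 * q.2, p.1 * q.2 + p.2 * q.1)

/-- Twisted powers, with `(a,b)^{∗0} = (1,0)`. -/
def tpow {A : Type*} [CommSemiring A] (p : A × A) : ℕ → A × A
  | 0 => (1, 0)
  | n + 1 => tmul (tpow p n) p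

/-- `ρ` is a congruence on the commutative semiring `A`. -/
def IsCong {A : Type*} [CommSemiring A] (ρ : Set (A × A)) : Prop :=
  (∀ a : A, (a, a) ∈ ρ) ∧
  (∀ a b : A, (a, b) ∈ ρ → (b, a) ∈ ρ) ∧
  (∀ a b c : A, (a, b) ∈ ρ → (b, c) ∈ ρ → (a, c) ∈ ρ) ∧
  (∀ a b c d : A, (a, b) ∈ ρ → (c, d) ∈ ρ → (a + c, b + d) ∈ ρ) ∧
  (∀ a b c d : A, (a, b) ∈ ρ → (c, d) ∈ ρ → (a * c, b * d) ∈ ρ)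

/-- `ρ₊ = {(a,b) : (a+c, b+c) ∈ ρ for some c}`. -/
def plusPart {A : Type*} [CommSemiring A] (ρ : Set (A × A)) : Set (A × A) :=
  {p | ∃ c : A, (p.1 + c, p.2 + c) ∈ ρ}

/-- `√ρ = {(a,b) : (a,b)^{∗n} + (c,c) ∈ ρ for some c and some positive n}`. -/
def rad {A : Type*} [CommSemiring A] (ρ : Set (A × A)) : Set (A × A) :=
  {p | ∃ c : A, ∃ n : ℕ, 0 < n ∧ tpow p n + (c, c) ∈ ρ}

/-! The twisted product is the multiplication of the semiring `A[ℤ/2]`, in which the diagonal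
pairs `(c, c)` form an ideal. Hence `(q + (c, c))^{∗m} = q^{∗m} + (d, d)` for some `d`, so a
relation `(q^{∗n} + (c, c))^{∗m} + (d', d') ∈ ρ` witnessing `q ∈ √(√ρ)` becomes
`q^{∗nm} + (d + d', d + d') ∈ ρ`. The shift by `(c, c)` in the definition of `ρ₊` is absorbed
in the same way. -/

section

variable {A : Type*} [CommSemiring A]

lemma tmul_comm (p q : A × A) : tmul p q = tmul q p := by
  simp only [tmul, Prod.ext_iff]
  constructor <;> ring

lemma tmul_assoc (p q r : A × A) : tmul (tmul p q) r = tmul p (tmul q r) := by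
  simp only [tmul, Prod.ext_iff]
  constructor <;> ring

lemma one_tmul (p : A × A) : tmul (1, 0) p = p := by
  simp [tmul]

lemma tpow_one (p : A × A) : tpow p 1 = p :=
  one_tmul p

lemma tpow_add (p : A × A) (m n : ℕ) : tpow p (m + n) = tmul (tpow p m) (tpow p n) := by
  induction n with
  | zero => rw [Nat.add_zero, tmul_comm, tpow, one_tmul]
  | succ n ih => rw [← Nat.add_assoc, tpow, ih, tpow, tmul_assoc]

lemma tpow_mul (p : A × A) (m n : ℕ) : tpow p (m * n) = tpow (tpow p m) n := by
  induction n with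
  | zero => rfl
  | succ n ih => rw [Nat.mul_succ, tpow_add, ih, tpow]

lemma add_diag_tmul (p q : A × A) (c : A) :
    tmul (p + (c, c)) q = tmul p q + (c * (q.1 + q.2), c * (q.1 + q.2)) := by
  simp only [tmul, Prod.fst_add, Prod.snd_add, Prod.ext_iff]
  constructor <;> ring

lemma exists_tpow_add_diag (p : A × A) (c : A) (n : ℕ) :
    ∃ d : A, tpow (p + (c, c)) n = tpow p n + (d, d) := by
  induction n with
  | zero => exact ⟨0, by simp [tpow]⟩
  | succ n ih =>
    obtain ⟨d, hd⟩ := ih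
    refine ⟨d * (p.1 + c + (p.2 + c)) + c * ((tpow p n).1 + (tpow p n).2), ?_⟩
    rw [tpow, tpow, hd, add_diag_tmul, tmul_comm, add_diag_tmul, tmul_comm]
    simp only [Prod.fst_add, Prod.snd_add, Prod.ext_iff]
    constructor <;> ring

lemma subset_rad (ρ : Set (A × A)) : ρ ⊆ rad ρ :=
  fun p hp => ⟨0, 1, Nat.one_pos, by rwa [tpow_one, Prod.mk_zero_zero, add_zero]⟩

lemma rad_mono {ρ σ : Set (A × A)} (h : ρ ⊆ σ) : rad ρ ⊆ rad σ :=
  fun _ ⟨c, n, hn, hmem⟩ => ⟨c, n, hn, h hmem⟩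

lemma rad_rad_subset (ρ : Set (A × A)) : rad (rad ρ) ⊆ rad ρ := by
  rintro p ⟨c, n, hn, d, m, hm, hmem⟩
  obtain ⟨e, he⟩ := exists_tpow_add_diag (tpow p n) c m
  refine ⟨e + d, n * m, Nat.mul_pos hn hm, ?_⟩
  rwa [he, ← tpow_mul, add_assoc, Prod.mk_add_mk] at hmem

lemma subset_plusPart (ρ : Set (A × A)) : ρ ⊆ plusPart ρ :=
  fun p hp => ⟨0, by simpa using hp⟩

lemma rad_plusPart_subset (ρ : Set (A × A)) : rad (plusPart ρ) ⊆ rad ρ := by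
  rintro p ⟨c, n, hn, d, hd⟩
  refine ⟨c + d, n, hn, ?_⟩
  rwa [Prod.fst_add, Prod.snd_add, add_assoc, add_assoc] at hd

end

theorem rad_rad_general {A : Type*} [CommSemiring A] (ρ : Set (A × A)) :
    rad (rad ρ) = rad ρ ∧ rad ρ = rad (plusPart ρ) :=
  ⟨(rad_rad_subset ρ).antisymm (subset_rad _),
    (rad_mono (subset_plusPart ρ)).antisymm (rad_plusPart_subset ρ)⟩

/-- For a congruence `ρ` on a commutative semiring `A`,
`√(√ρ) = √ρ = √(ρ₊)`; in particular `√ρ` is a radical congruence. -/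
theorem rad_rad {A : Type*} [CommSemiring A] (ρ : Set (A × A)) (hρ : IsCong ρ) :
    rad (rad ρ) = rad ρ ∧ rad ρ = rad (plusPart ρ) :=
  rad_rad_general ρ
end

section
/- Let A be a commutative semiring and ρ a maximal congruence on A satisfying ρ = ρ₊ (where ρ₊ = {(a,b) : (a+c, b+c) ∈ ρ for some c ∈ A}). Then ρ is a prime congruence: whenever (ac+bd, ad+bc) ∈ ρ, either (a,b) ∈ ρ or (c,d) ∈ ρ. -/
/-- `(x, y)` is related iff `(a, b) * (x, y) ∈ ρ`, for the product
`(a, b) * (x, y) = (a x + b y, a y + b x)` of formal differences `a - b` and `x - y`. -/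
def congColon {A : Type*} [CommSemiring A] (ρ : Set (A × A)) (a b : A) : Set (A × A) :=
  {p | (a * p.1 + b * p.2, a * p.2 + b * p.1) ∈ ρ}

section

variable {A : Type*} [CommSemiring A] {ρ : Set (A × A)}

theorem mem_of_add_mem_of_eq_plusPart (hplus : ρ = plusPart ρ) {x y z : A}
    (h : (x + z, y + z) ∈ ρ) : (x, y) ∈ ρ := by
  rw [hplus]
  exact ⟨z, h⟩

theorem subset_congColon (hρ : IsCong ρ) (a b : A) : ρ ⊆ congColon ρ a b := by
  obtain ⟨hrefl, hsymm, -, hadd, hmul⟩ := hρ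
  rintro ⟨x, y⟩ hxy
  exact hadd _ _ _ _ (hmul _ _ _ _ (hrefl a) hxy) (hmul _ _ _ _ (hrefl b) (hsymm _ _ hxy))

theorem isCong_congColon (hρ : IsCong ρ) (hplus : ρ = plusPart ρ) (a b : A) :
    IsCong (congColon ρ a b) := by
  obtain ⟨hrefl, hsymm, -, hadd, hmul⟩ := hρ
  refine ⟨fun x => hrefl _, fun x y h => hsymm _ _ h, ?_, ?_, ?_⟩
  · intro x y z hxy hyz
    apply mem_of_add_mem_of_eq_plusPart hplus (z := a * y + b * y)
    convert hadd _ _ _ _ hxy hyz using 2 <;> ring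
  · intro x y z w hxy hzw
    show (a * (x + z) + b * (y + w), a * (y + w) + b * (x + z)) ∈ ρ
    convert hadd _ _ _ _ hxy hzw using 2 <;> ring
  · intro x y z w hxy hzw
    apply mem_of_add_mem_of_eq_plusPart hplus (z := a * (y * z) + b * (y * z))
    convert hadd _ _ _ _ (hmul _ _ _ _ hxy (hrefl z)) (hmul _ _ _ _ hzw (hrefl y)) using 2 <;> ring

theorem one_zero_mem_congColon_iff (a b : A) :
    ((1 : A), (0 : A)) ∈ congColon ρ a b ↔ (a, b) ∈ ρ := by
  simp [congColon]

end

theorem maximal_isPrime_general {A : Type*} [CommSemiring A] (ρ : Set (A × A))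
    (hρ : IsCong ρ)
    (hmax : ∀ τ : Set (A × A), IsCong τ → ρ ⊆ τ → τ = ρ ∨ τ = Set.univ)
    (hplus : ρ = plusPart ρ) :
    ∀ a b c d : A, (a * c + b * d, a * d + b * c) ∈ ρ → (a, b) ∈ ρ ∨ (c, d) ∈ ρ := by
  intro a b c d hcd
  have hcd' : (c, d) ∈ congColon ρ a b := hcd
  rcases hmax _ (isCong_congColon hρ hplus a b) (subset_congColon hρ a b) with h | h
  · exact Or.inr (h ▸ hcd')
  · exact Or.inl ((one_zero_mem_congColon_iff a b).mp (h ▸ Set.mem_univ _))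

/-- A maximal congruence `ρ` on a commutative semiring satisfying `ρ = ρ₊`
is a prime congruence. -/
theorem maximal_isPrime {A : Type*} [CommSemiring A] (ρ : Set (A × A))
    (hρ : IsCong ρ) (hproper : ρ ≠ Set.univ)
    (hmax : ∀ τ : Set (A × A), IsCong τ → ρ ⊆ τ → τ = ρ ∨ τ = Set.univ)
    (hplus : ρ = plusPart ρ) :
    ∀ a b c d : A, (a * c + b * d, a * d + b * c) ∈ ρ → (a, b) ∈ ρ ∨ (c, d) ∈ ρ :=
  maximal_isPrime_general ρ hρ hmax hplus
end
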